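/- arXiv:2605.04344 — 3 statements merged into one kernel-verified Lean document; each statement's English description precedes it below -/
import Mathlib

section
/- Suppose the identifiability assumption holds: for any θ, θ' ∈ Θ, if TV_X(P^perturb_θ, P^perturb_{θ'}) = 0 for all X ∈ 𝒳, then TV_X(P_θ, P_{θ'}) = 0 for all X ∈ 𝒳. Then, if the base class 𝒫^base is extrapolable, the perturbed class 𝒫^perturb is extrapolable. -/
open Finset

/-- Total variation distance between two real-valued functions on a finite vocabulary. -/
noncomputable def tvDist {V : Type*} [Fintype V] (p q : V → ℝ) : ℝ :=
  (1 / 2) * ∑ i, |p i - q i|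

/-- Distance from a prefix to the (nonempty, finite) training support. -/
noncomputable def distToSupp {Xs : Type*} (M : Xs → Xs → ℝ)
    (supp : Finset Xs) (h : supp.Nonempty) (X : Xs) : ℝ :=
  supp.inf' h fun X₀ => M X X₀

/-- The perturbed model: first perturb the prefix via the kernel `T`, then apply `P`. -/
noncomputable def perturbedModel {Θ Xs V : Type*} [Fintype Xs]
    (T : Xs → Xs → ℝ) (P : Θ → Xs → V → ℝ) (θ : Θ) (X : Xs) (i : V) : ℝ :=
  ∑ Xt, T X Xt * P θ Xt i

/-- Extrapolation uncertainty of the model class `{P θ : θ ∈ Θ}` at level `δ`. -/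
noncomputable def extrapUncertainty {Θ Xs V : Type*} [Fintype V]
    (M : Xs → Xs → ℝ) (supp : Finset Xs) (h : supp.Nonempty)
    (P : Θ → Xs → V → ℝ) (δ : ℝ) : ℝ :=
  sSup { r | ∃ X' θ θ',
    distToSupp M supp h X' ≤ δ ∧
    (∀ X ∈ supp, tvDist (P θ X) (P θ' X) = 0) ∧
    r = tvDist (P θ X') (P θ' X') }

lemma tvDist_nonneg {V : Type*} [Fintype V] (p q : V → ℝ) : 0 ≤ tvDist p q := by
  unfold tvDist
  positivity

lemma tvDist_eq_zero_iff {V : Type*} [Fintype V] (p q : V → ℝ) :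
    tvDist p q = 0 ↔ p = q := by
  unfold tvDist
  constructor
  · intro h
    have h' : ∑ i, |p i - q i| = 0 := by linarith
    have := (Finset.sum_eq_zero_iff_of_nonneg (fun i _ => abs_nonneg _)).mp h'
    funext i
    have := this i (Finset.mem_univ i)
    have : p i - q i = 0 := abs_eq_zero.mp this
    linarith
  · intro h; subst h; simp

lemma tvDist_le_one {V : Type*} [Fintype V] (p q : V → ℝ)
    (hp : (∀ i, 0 ≤ p i) ∧ ∑ i, p i = 1) (hq : (∀ i, 0 ≤ q i) ∧ ∑ i, q i = 1) :
    tvDist p q ≤ 1 := by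
  unfold tvDist
  have h : ∑ i, |p i - q i| ≤ ∑ i, (p i + q i) := by
    apply Finset.sum_le_sum
    intro i _
    have := hp.1 i; have := hq.1 i
    rw [abs_sub_le_iff]; constructor <;> linarith
  rw [Finset.sum_add_distrib, hp.2, hq.2] at h
  linarith

/-- **Adaptivity.** Under the identifiability assumption, if the base class is
extrapolable then the perturbed class is extrapolable. -/
theorem perturbed_extrapolable_of_base_extrapolable
    {Θ Xs V : Type*} [Fintype Xs] [Nonempty Xs] [Fintype V] [Nonempty V]
    (M : Xs → Xs → ℝ) (supp : Finset Xs) (hsupp : supp.Nonempty)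
    (T : Xs → Xs → ℝ) (hT : ∀ X, (∀ Y, 0 ≤ T X Y) ∧ ∑ Y, T X Y = 1)
    (P : Θ → Xs → V → ℝ) (hP : ∀ θ X, (∀ i, 0 ≤ P θ X i) ∧ ∑ i, P θ X i = 1)
    (hident : ∀ θ θ' : Θ,
      (∀ X ∈ supp, tvDist (perturbedModel T P θ X) (perturbedModel T P θ' X) = 0) →
      ∀ X ∈ supp, tvDist (P θ X) (P θ' X) = 0)
    (hbase : ∀ δ : ℝ, 0 < δ → extrapUncertainty M supp hsupp P δ = 0) :
    ∀ δ : ℝ, 0 < δ → extrapUncertainty M supp hsupp (perturbedModel T P) δ = 0 := by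
  intro δ hδ
  -- a large δ' dominating the distance of every prefix to the support
  set δ' : ℝ := max 1 (Finset.univ.sup' Finset.univ_nonempty
    (fun X => distToSupp M supp hsupp X)) with hδ'def
  have hδ'pos : 0 < δ' := lt_of_lt_of_le one_pos (le_max_left _ _)
  have hδ'big : ∀ X : Xs, distToSupp M supp hsupp X ≤ δ' := fun X =>
    le_trans (Finset.le_sup' _ (Finset.mem_univ X)) (le_max_right _ _)
  -- key: base agreement on supp implies full agreement everywhere
  have key : ∀ θ θ' : Θ, (∀ X ∈ supp, tvDist (P θ X) (P θ' X) = 0) →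
      ∀ X : Xs, P θ X = P θ' X := by
    intro θ θ' hagree X
    have hmem : tvDist (P θ X) (P θ' X) ∈
        { r | ∃ X' t t', distToSupp M supp hsupp X' ≤ δ' ∧
          (∀ Y ∈ supp, tvDist (P t Y) (P t' Y) = 0) ∧
          r = tvDist (P t X') (P t' X') } :=
      ⟨X, θ, θ', hδ'big X, hagree, rfl⟩
    have hbdd : BddAbove { r | ∃ X' t t', distToSupp M supp hsupp X' ≤ δ' ∧
        (∀ Y ∈ supp, tvDist (P t Y) (P t' Y) = 0) ∧
        r = tvDist (P t X') (P t' X') } := by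
      refine ⟨1, fun r hr => ?_⟩
      obtain ⟨X', t, t', _, _, hr⟩ := hr
      rw [hr]
      exact tvDist_le_one _ _ (hP t X') (hP t' X')
    have hle : tvDist (P θ X) (P θ' X) ≤ extrapUncertainty M supp hsupp P δ' :=
      le_csSup hbdd hmem
    rw [hbase δ' hδ'pos] at hle
    exact (tvDist_eq_zero_iff _ _).mp (le_antisymm hle (tvDist_nonneg _ _))
  -- every element of the perturbed uncertainty set is zero
  have hsub : { r | ∃ X' t t', distToSupp M supp hsupp X' ≤ δ ∧
      (∀ Y ∈ supp, tvDist (perturbedModel T P t Y) (perturbedModel T P t' Y) = 0) ∧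
      r = tvDist (perturbedModel T P t X') (perturbedModel T P t' X') } ⊆ {(0 : ℝ)} := by
    intro r hr
    obtain ⟨X', t, t', _, hagree, hr⟩ := hr
    have hbase_agree := hident t t' hagree
    have heq : ∀ X : Xs, P t X = P t' X := key t t' hbase_agree
    have : perturbedModel T P t X' = perturbedModel T P t' X' := by
      funext i
      unfold perturbedModel
      exact Finset.sum_congr rfl fun Xt _ => by rw [heq Xt]
    rw [hr, this, (tvDist_eq_zero_iff _ _).mpr rfl]
    rfl
  unfold extrapUncertainty
  rcases Set.subset_singleton_iff_eq.mp hsub with h | h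
  · rw [h]; exact Real.sSup_empty
  · rw [h]; exact csSup_singleton 0
end

section
/- Fix δ > 0 and suppose that for every X' ∈ 𝒳* with d(X',𝒳) ≤ δ there exists X₀ ∈ 𝒳 such that T(·|X') = T(·|X₀). Then U_{𝒫^perturb}(δ) = 0 for any base class 𝒫^base. Consequently, if this condition holds for every δ > 0, the perturbed class 𝒫^perturb is extrapolable. -/
open Finset

/-- **Extrapolability.** If for every `X'` within distance `δ` of the support
there is `X₀` in the support with `T(·|X') = T(·|X₀)`, then the extrapolation uncertainty of
the perturbed class at level `δ` is zero, for any base class. Consequently, if this condition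
holds for every `δ > 0`, the perturbed class is extrapolable. -/
theorem perturbed_extrapolable_of_perturbation_cover
    {Θ Xs V : Type*} [Fintype Xs] [Nonempty Xs] [Fintype V] [Nonempty V]
    (M : Xs → Xs → ℝ) (supp : Finset Xs) (hsupp : supp.Nonempty)
    (T : Xs → Xs → ℝ) (hT : ∀ X, (∀ Y, 0 ≤ T X Y) ∧ ∑ Y, T X Y = 1)
    (P : Θ → Xs → V → ℝ) (hP : ∀ θ X, (∀ i, 0 ≤ P θ X i) ∧ ∑ i, P θ X i = 1) :
    (∀ δ : ℝ, 0 < δ →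
      (∀ X' : Xs, distToSupp M supp hsupp X' ≤ δ → ∃ X₀ ∈ supp, T X' = T X₀) →
      extrapUncertainty M supp hsupp (perturbedModel T P) δ = 0) ∧
    ((∀ δ : ℝ, 0 < δ →
        ∀ X' : Xs, distToSupp M supp hsupp X' ≤ δ → ∃ X₀ ∈ supp, T X' = T X₀) →
      ∀ δ : ℝ, 0 < δ → extrapUncertainty M supp hsupp (perturbedModel T P) δ = 0) := by
  have main : ∀ δ : ℝ, 0 < δ →
      (∀ X' : Xs, distToSupp M supp hsupp X' ≤ δ → ∃ X₀ ∈ supp, T X' = T X₀) →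
      extrapUncertainty M supp hsupp (perturbedModel T P) δ = 0 := by
    intro δ hδ hcov
    have hsub : { r | ∃ X' θ θ',
        distToSupp M supp hsupp X' ≤ δ ∧
        (∀ X ∈ supp, tvDist (perturbedModel T P θ X) (perturbedModel T P θ' X) = 0) ∧
        r = tvDist (perturbedModel T P θ X') (perturbedModel T P θ' X') } ⊆ {(0:ℝ)} := by
      rintro r ⟨X', θ, θ', hd, hzero, rfl⟩
      obtain ⟨X₀, hX₀, hTeq⟩ := hcov X' hd
      have heq : ∀ θ'', perturbedModel T P θ'' X' = perturbedModel T P θ'' X₀ := by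
        intro θ''
        funext i
        simp only [perturbedModel, hTeq]
      simp only [Set.mem_singleton_iff, heq]
      exact hzero X₀ hX₀
    unfold extrapUncertainty
    rcases Set.subset_singleton_iff_eq.mp hsub with h | h
    · rw [h]; exact Real.sSup_empty
    · rw [h]; exact csSup_singleton 0
  exact ⟨main, fun h δ hδ => main δ hδ (h δ hδ)⟩
end

section
/- Let 𝒮 ⊆ 𝒳 be nonempty and fix δ > 0. Suppose that for every X' ∈ 𝒳* with d(X',𝒳) ≤ δ there exists X₀ ∈ 𝒮 such that T(·|X') = T(·|X₀). Then U^𝒮_{𝒫^perturb}(δ) = 0 for any base class 𝒫^base, where U^𝒮_{𝒫^perturb}(δ) denotes the extrapolation uncertainty with 𝒳 replaced by 𝒮, i.e., the supremum of TV_{X'}(P^perturb_θ, P^perturb_{θ'}) over all X' ∈ 𝒳* with d(X',𝒮) ≤ δ and all pairs θ, θ' ∈ Θ with TV_X(P^perturb_θ, P^perturb_{θ'}) = 0 for every X ∈ 𝒮. -/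
open Finset

/-- **Relaxed extrapolability.** Let `𝒮 ⊆ 𝒳` be nonempty and fix `δ > 0`.
If every `X'` within distance `δ` of `𝒳` has `T(·|X') = T(·|X₀)` for some `X₀ ∈ 𝒮`, then
the extrapolation uncertainty of the perturbed class with `𝒳` replaced by `𝒮` is zero, for
any base class. -/
theorem perturbed_extrapolable_over_subset
    {Θ Xs V : Type*} [Fintype Xs] [Nonempty Xs] [Fintype V] [Nonempty V]
    (M : Xs → Xs → ℝ) (supp : Finset Xs) (hsupp : supp.Nonempty)
    (Ssub : Finset Xs) (hSsub : Ssub ⊆ supp) (hS : Ssub.Nonempty)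
    (T : Xs → Xs → ℝ) (hT : ∀ X, (∀ Y, 0 ≤ T X Y) ∧ ∑ Y, T X Y = 1)
    (P : Θ → Xs → V → ℝ) (hP : ∀ θ X, (∀ i, 0 ≤ P θ X i) ∧ ∑ i, P θ X i = 1)
    (δ : ℝ) (hδ : 0 < δ)
    (hcov : ∀ X' : Xs, distToSupp M supp hsupp X' ≤ δ → ∃ X₀ ∈ Ssub, T X' = T X₀) :
    extrapUncertainty M Ssub hS (perturbedModel T P) δ = 0 := by
  classical
  set S : Set ℝ := { r | ∃ X' θ θ',
    distToSupp M Ssub hS X' ≤ δ ∧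
    (∀ X ∈ Ssub, tvDist (perturbedModel T P θ X) (perturbedModel T P θ' X) = 0) ∧
    r = tvDist (perturbedModel T P θ X') (perturbedModel T P θ' X') } with hSdef
  have hsub : S ⊆ {0} := by
    rintro r ⟨X', θ, θ', hd, hagree, rfl⟩
    -- distance to the larger support is at most the distance to the subset
    have hd' : distToSupp M supp hsupp X' ≤ δ := by
      refine le_trans ?_ hd
      obtain ⟨x, hx, hxe⟩ := Finset.exists_mem_eq_inf' hS (fun X₀ => M X' X₀)
      unfold distToSupp
      rw [hxe]
      exact Finset.inf'_le _ (hSsub hx)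
    obtain ⟨X₀, hX₀, hTeq⟩ := hcov X' hd'
    have hpm : ∀ ϑ, perturbedModel T P ϑ X' = perturbedModel T P ϑ X₀ := by
      intro ϑ; funext i; simp [perturbedModel, hTeq]
    have hzero := hagree X₀ hX₀
    show tvDist (perturbedModel T P θ X') (perturbedModel T P θ' X') = 0
    rw [hpm θ, hpm θ']
    exact hzero
  rcases Set.eq_empty_or_nonempty S with h | h
  · show sSup S = 0
    rw [h, Real.sSup_empty]
  · have hSeq : S = {0} := by
      refine Set.Subset.antisymm hsub ?_
      obtain ⟨r, hr⟩ := h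
      have : r = 0 := hsub hr
      subst this
      intro x hx
      simp only [Set.mem_singleton_iff] at hx
      subst hx; exact hr
    show sSup S = 0
    rw [hSeq, csSup_singleton]
end
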